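/- Let 1 < p < ∞, ν a positive weight on D, and φ, ψ analytic self-maps of D. There exists C > 0 such that for every f in the unit ball of B^p and every z ∈ D: ν(z)|f'(φ(z))φ'(z) - f'(ψ(z))ψ'(z)| ≤ C·[ |ν(z)φ'(z)/(1-|φ(z)|²) - ν(z)ψ'(z)/(1-|ψ(z)|²)| + (ν(z)|ψ'(z)|/(1-|ψ(z)|²))·ρ(φ(z),ψ(z)) ]. -/

import Mathlib

set_option autoImplicit false

open MeasureTheory Metric Complex

/-!
A function `f` in the unit ball of `B^p` is a Bloch function. On the disc `D(w, r)` with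
`r = (1 - |w|)/2` the weight `1 - |z|²` stays between `r` and `6r`, so the sub-mean-value property
of `|f'|^p` (the mean value property followed by Jensen's inequality) bounds `r^p |f'(w)|^p` by the
`B^p` energy, whence `(1 - |w|²)|f'(w)| ≤ 24`. The Cauchy estimate turns this into
`|f''(w)| ≲ (1 - |w|)⁻²`, and the mean value theorem on segments shows that `(1 - |w|²) f'(w)` is
Lipschitz for the pseudo-hyperbolic distance `ρ`. The theorem then follows from the splitting
`ν(f'(φ)φ' - f'(ψ)ψ') = (1 - |φ|²)f'(φ) · (νφ'/(1 - |φ|²) - νψ'/(1 - |ψ|²))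
  + ((1 - |φ|²)f'(φ) - (1 - |ψ|²)f'(ψ)) · νψ'/(1 - |ψ|²)`.
-/

open Real Set

theorem Real.rpow_le_mul_rpow_of_le_of_le_mul {r t c q : ℝ} (hr : 0 < r) (hrt : r ≤ t)
    (htc : t ≤ c * r) (hc : 1 ≤ c) (hq : -1 ≤ q) : r ^ q ≤ c * t ^ q := by
  rcases le_or_gt 0 q with hq0 | hq0
  · calc r ^ q ≤ t ^ q := rpow_le_rpow hr.le hrt hq0
      _ ≤ c * t ^ q := le_mul_of_one_le_left (rpow_nonneg (hr.le.trans hrt) q) hc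
  · calc r ^ q = c ^ (-q) * (c * r) ^ q := by
          rw [mul_rpow (by linarith) hr.le, ← mul_assoc, ← rpow_add (by linarith), neg_add_cancel,
            rpow_zero, one_mul]
      _ ≤ c ^ (1 : ℝ) * t ^ q :=
          mul_le_mul (rpow_le_rpow_of_exponent_le hc (by linarith))
            (rpow_le_rpow_of_nonpos (hr.trans_le hrt) htc hq0.le) (by positivity) (by positivity)
      _ = c * t ^ q := by rw [rpow_one]

theorem Complex.volume_real_ball (c : ℂ) {r : ℝ} (hr : 0 ≤ r) :
    volume.real (ball c r) = π * r ^ 2 := by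
  simp [Measure.real, Complex.volume_ball, ENNReal.toReal_ofReal hr, mul_comm]

theorem integral_Ioo_circleMap_eq_circleAverage (h : ℂ → ℝ) (c : ℂ) (r : ℝ) :
    ∫ θ in Ioo (-π) π, h (circleMap c r θ) = 2 * π * circleAverage h c r := by
  have hper : Function.Periodic (fun θ => h (circleMap c r θ)) (2 * π) := fun θ => by
    simp [periodic_circleMap c r θ]
  have hshift := hper.intervalIntegral_add_eq (-π) 0
  rw [show -π + 2 * π = π by ring, zero_add] at hshift
  rw [← integral_Ioc_eq_integral_Ioo, ← intervalIntegral.integral_of_le (by linarith [pi_pos]),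
    hshift, circleAverage_def, smul_eq_mul]
  field_simp

theorem setIntegral_ball_eq_setIntegral_polar (h : ℂ → ℝ) (c : ℂ) (R : ℝ) :
    ∫ z in ball c R, h z
      = ∫ q in Ioo 0 R ×ˢ Ioo (-π) π, q.1 * h (circleMap c q.1 q.2) := by
  set S : Set (ℝ × ℝ) := Ioo 0 R ×ˢ Ioo (-π) π
  have hpolar (q : ℝ × ℝ) : c + Complex.polarCoord.symm q = circleMap c q.1 q.2 := by
    simp [circleMap, Complex.polarCoord_symm_apply, Complex.exp_mul_I,
      ← Complex.ofReal_cos, ← Complex.ofReal_sin]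
  have hmem (q : ℝ × ℝ) (hq : 0 < q.1) : circleMap c q.1 q.2 ∈ ball c R ↔ q.1 < R := by
    rw [mem_ball, dist_eq_norm, circleMap_sub_center, norm_circleMap_zero, abs_of_pos hq]
  have hST : S ⊆ polarCoord.target := by
    rw [polarCoord_target]
    exact prod_mono Ioo_subset_Ioi_self subset_rfl
  calc ∫ z in ball c R, h z = ∫ z, (ball c R).indicator h (c + z) := by
        rw [integral_add_left_eq_self (fun z => (ball c R).indicator h z),
          integral_indicator measurableSet_ball]
    _ = ∫ q in polarCoord.target, q.1 • (ball c R).indicator h (circleMap c q.1 q.2) := by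
        rw [← Complex.integral_comp_polarCoord_symm]
        simp_rw [hpolar]
    _ = ∫ q in polarCoord.target, S.indicator (fun q => q.1 * h (circleMap c q.1 q.2)) q := by
        refine setIntegral_congr_fun polarCoord.open_target.measurableSet fun q hq => ?_
        rw [polarCoord_target] at hq
        by_cases hqR : q.1 < R
        · have hqS : q ∈ S := ⟨⟨hq.1, hqR⟩, hq.2⟩
          rw [indicator_of_mem ((hmem q hq.1).2 hqR), indicator_of_mem hqS, smul_eq_mul]
        · have hqS : q ∉ S := fun hqS => hqR hqS.1.2
          rw [indicator_of_notMem (mt (hmem q hq.1).1 hqR), indicator_of_notMem hqS, smul_zero]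
    _ = ∫ q in S, q.1 * h (circleMap c q.1 q.2) := by
        rw [setIntegral_indicator (measurableSet_Ioo.prod measurableSet_Ioo), inter_eq_right.2 hST]

theorem setIntegral_ball_eq_intervalIntegral_circleAverage {h : ℂ → ℝ} {c : ℂ} {R : ℝ}
    (hR : 0 ≤ R) (hh : ContinuousOn h (closedBall c R)) :
    ∫ z in ball c R, h z = ∫ r in (0)..R, 2 * π * r * circleAverage h c r := by
  set K : ℝ × ℝ → ℝ := fun q => q.1 * h (circleMap c q.1 q.2)
  have hK : IntegrableOn K (Icc 0 R ×ˢ Icc (-π) π) := by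
    refine ContinuousOn.integrableOn_compact (isCompact_Icc.prod isCompact_Icc) ?_
    refine continuousOn_fst.mul (hh.comp (by fun_prop) fun q hq => ?_)
    rw [mem_closedBall, dist_eq_norm, circleMap_sub_center, norm_circleMap_zero,
      abs_of_nonneg hq.1.1]
    exact hq.1.2
  rw [setIntegral_ball_eq_setIntegral_polar, Measure.volume_eq_prod,
    setIntegral_prod K (hK.mono_set (prod_mono Ioo_subset_Icc_self Ioo_subset_Icc_self)),
    intervalIntegral.integral_of_le hR, integral_Ioc_eq_integral_Ioo]
  refine setIntegral_congr_fun measurableSet_Ioo fun r _ => ?_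
  rw [integral_const_mul, integral_Ioo_circleMap_eq_circleAverage]
  ring

section SubMeanValue

variable {E : Type*} [NormedAddCommGroup E] [NormedSpace ℂ E] [CompleteSpace E]
  {g : ℂ → E} {c : ℂ} {R : ℝ}

theorem DiffContOnCl.norm_le_circleAverage_norm (hg : DiffContOnCl ℂ g (ball c |R|)) :
    ‖g c‖ ≤ Real.circleAverage (‖g ·‖) c R := by
  conv_lhs => rw [← hg.circleAverage]
  rw [circleAverage_def, circleAverage_def, norm_smul, Real.norm_of_nonneg (by positivity),
    smul_eq_mul]
  gcongr
  exact intervalIntegral.norm_integral_le_integral_norm (by positivity)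

theorem DiffContOnCl.norm_le_setAverage_norm (hR : 0 < R) (hg : DiffContOnCl ℂ g (ball c R)) :
    ‖g c‖ ≤ ⨍ z in ball c R, ‖g z‖ := by
  have hcont : ContinuousOn (‖g ·‖) (closedBall c R) := hg.continuousOn_ball.norm
  have havg :
      IntervalIntegrable (fun r => 2 * π * r * Real.circleAverage (‖g ·‖) c r) volume 0 R := by
    have hcont' : ContinuousOn (‖g ·‖) {z | ‖z - c‖ ∈ Icc 0 R} :=
      hcont.mono fun z hz => by simpa [dist_eq_norm] using hz.2
    exact ContinuousOn.intervalIntegrable_of_Icc hR.le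
      ((continuousOn_const.mul continuousOn_id).mul (hcont'.circleAverage fun r hr => hr.1))
  have hmono : ∫ r in (0)..R, 2 * π * r * ‖g c‖
      ≤ ∫ r in (0)..R, 2 * π * r * Real.circleAverage (‖g ·‖) c r := by
    refine intervalIntegral.integral_mono_on hR.le
      ((by fun_prop : Continuous fun r => 2 * π * r * ‖g c‖).intervalIntegrable _ _) havg
      fun r hr => ?_
    have hr' : |r| ≤ R := by rw [abs_of_nonneg hr.1]; exact hr.2
    have := hr.1
    gcongr
    exact (hg.mono (ball_subset_ball hr')).norm_le_circleAverage_norm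
  rw [setAverage_eq, Complex.volume_real_ball c hR.le, smul_eq_mul, le_inv_mul_iff₀ (by positivity),
    setIntegral_ball_eq_intervalIntegral_circleAverage hR.le hcont]
  refine le_trans (le_of_eq ?_) hmono
  rw [intervalIntegral.integral_mul_const, intervalIntegral.integral_const_mul, integral_id]
  ring

theorem DiffContOnCl.norm_rpow_le_setAverage {p : ℝ} (hR : 0 < R) (hp : 1 ≤ p)
    (hg : DiffContOnCl ℂ g (ball c R)) :
    ‖g c‖ ^ p ≤ ⨍ z in ball c R, ‖g z‖ ^ p := by
  have hcont : ContinuousOn (‖g ·‖) (closedBall c R) := hg.continuousOn_ball.norm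
  have hint {F : ℝ → ℝ} (hF : Continuous F) : IntegrableOn (fun z => F ‖g z‖) (ball c R) :=
    (hF.comp_continuousOn hcont).integrableOn_compact (isCompact_closedBall c R)
      |>.mono_set ball_subset_closedBall
  calc ‖g c‖ ^ p ≤ (⨍ z in ball c R, ‖g z‖) ^ p := by
        gcongr
        exact hg.norm_le_setAverage_norm hR
    _ ≤ ⨍ z in ball c R, ‖g z‖ ^ p :=
        (convexOn_rpow hp).map_set_average_le (continuousOn_id.rpow_const fun _ _ => Or.inr
          (by linarith)) isClosed_Ici (by simp [hR, NNReal.pi_ne_zero]) measure_ball_lt_top.ne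
          (ae_of_all _ fun z => norm_nonneg (g z)) (hint continuous_id)
          (hint (continuous_id.rpow_const fun _ => Or.inr (by linarith)))

end SubMeanValue

theorem abs_norm_sq_sub_norm_sq_le {E : Type*} [SeminormedAddCommGroup E] {a b : E}
    (ha : ‖a‖ ≤ 1) (hb : ‖b‖ ≤ 1) : |‖a‖ ^ 2 - ‖b‖ ^ 2| ≤ 2 * ‖a - b‖ := by
  rw [sq_sub_sq, abs_mul, abs_of_nonneg (by positivity : 0 ≤ ‖a‖ + ‖b‖)]
  nlinarith [abs_norm_sub_norm_le a b, abs_nonneg (‖a‖ - ‖b‖)]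

section HyperbolicDisc

variable {w z : ℂ}

theorem closedBall_subset_ball_one (hw : ‖w‖ < 1) :
    closedBall w ((1 - ‖w‖) / 2) ⊆ ball (0 : ℂ) 1 := by
  intro z hz
  rw [mem_closedBall, dist_eq_norm] at hz
  rw [mem_ball_zero_iff]
  linarith [norm_le_norm_add_norm_sub' z w]

theorem one_sub_norm_sq_mem_Icc (hz : ‖z - w‖ ≤ (1 - ‖w‖) / 2) :
    (1 - ‖w‖) / 2 ≤ 1 - ‖z‖ ^ 2 ∧ 1 - ‖z‖ ^ 2 ≤ 6 * ((1 - ‖w‖) / 2) := by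
  have h₁ := norm_le_norm_add_norm_sub' z w
  have h₂ := norm_le_norm_add_norm_sub' w z
  rw [norm_sub_rev] at h₂
  constructor <;> nlinarith [norm_nonneg z, norm_nonneg (z - w)]

end HyperbolicDisc

noncomputable def pseudoHyperbolicDist (a b : ℂ) : ℝ :=
  ‖(a - b) / (1 - (starRingEnd ℂ) b * a)‖

section PseudoHyperbolic

variable {a b : ℂ}

theorem one_sub_conj_mul_ne_zero (ha : a ∈ ball (0 : ℂ) 1) (hb : b ∈ ball (0 : ℂ) 1) :
    1 - (starRingEnd ℂ) b * a ≠ 0 := by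
  rw [sub_ne_zero]
  refine fun h => (?_ : ‖(starRingEnd ℂ) b * a‖ < 1).ne (by rw [← h, norm_one])
  rw [norm_mul, RCLike.norm_conj]
  rw [mem_ball_zero_iff] at ha hb
  nlinarith [norm_nonneg a]

theorem one_sub_pseudoHyperbolicDist_mul_norm_sub_le (ha : a ∈ ball (0 : ℂ) 1)
    (hb : b ∈ ball (0 : ℂ) 1) :
    (1 - pseudoHyperbolicDist a b) * ‖a - b‖ ≤ pseudoHyperbolicDist a b * (1 - ‖b‖ ^ 2) := by
  have hden :
      1 - (starRingEnd ℂ) b * a = ((1 - ‖b‖ ^ 2 : ℝ) : ℂ) + (starRingEnd ℂ) b * (b - a) := by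
    rw [mul_sub, ← mul_comm b, Complex.mul_conj, Complex.normSq_eq_norm_sq]
    push_cast
    ring
  have hb1 : ‖b‖ < 1 := mem_ball_zero_iff.1 hb
  have hden_le : ‖1 - (starRingEnd ℂ) b * a‖ ≤ (1 - ‖b‖ ^ 2) + ‖a - b‖ := by
    rw [hden]
    refine (norm_add_le _ _).trans (add_le_add (le_of_eq ?_) ?_)
    · rw [Complex.norm_real, Real.norm_of_nonneg (by nlinarith [norm_nonneg b])]
    · rw [norm_mul, RCLike.norm_conj, norm_sub_rev]
      exact mul_le_of_le_one_left (norm_nonneg _) hb1.le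
  have hρ : ‖a - b‖ = pseudoHyperbolicDist a b * ‖1 - (starRingEnd ℂ) b * a‖ := by
    rw [pseudoHyperbolicDist, norm_div,
      div_mul_cancel₀ _ (norm_ne_zero_iff.2 (one_sub_conj_mul_ne_zero ha hb))]
  have hρ0 : 0 ≤ pseudoHyperbolicDist a b := norm_nonneg _
  nlinarith [mul_le_mul_of_nonneg_left hden_le hρ0]

end PseudoHyperbolic

section BlochSpace

variable {E : Type*} [NormedAddCommGroup E] [NormedSpace ℂ E] {g : ℂ → E} {M : ℝ}

theorem norm_deriv_le_of_forall_one_sub_norm_sq_mul_le (hg : DifferentiableOn ℂ g (ball 0 1))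
    (hM : ∀ z ∈ ball (0 : ℂ) 1, (1 - ‖z‖ ^ 2) * ‖g z‖ ≤ M) {w : ℂ} (hw : w ∈ ball (0 : ℂ) 1) :
    ‖deriv g w‖ ≤ 4 * M / (1 - ‖w‖) ^ 2 := by
  rw [mem_ball_zero_iff] at hw
  set r := (1 - ‖w‖) / 2
  have hr : 0 < r := half_pos (sub_pos.2 hw)
  have hsub := closedBall_subset_ball_one hw
  have hsphere : ∀ z ∈ sphere w r, ‖g z‖ ≤ M / r := by
    intro z hz
    have hlo := (one_sub_norm_sq_mem_Icc (mem_sphere_iff_norm.1 hz).le).1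
    rw [le_div_iff₀ hr]
    calc ‖g z‖ * r ≤ (1 - ‖z‖ ^ 2) * ‖g z‖ := by
          rw [mul_comm]; exact mul_le_mul_of_nonneg_right hlo (norm_nonneg _)
      _ ≤ M := hM z (hsub (sphere_subset_closedBall hz))
  calc ‖deriv g w‖ ≤ M / r / r :=
        Complex.norm_deriv_le_of_forall_mem_sphere_norm_le hr (hg.diffContOnCl_ball hsub) hsphere
    _ = 4 * M / (1 - ‖w‖) ^ 2 := by
        simp only [r]
        field_simp
        ring

theorem norm_sub_le_of_forall_one_sub_norm_sq_mul_le (hg : DifferentiableOn ℂ g (ball 0 1))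
    (hM : ∀ z ∈ ball (0 : ℂ) 1, (1 - ‖z‖ ^ 2) * ‖g z‖ ≤ M) {a b : ℂ} (hb : b ∈ ball (0 : ℂ) 1)
    (hab : ‖a - b‖ ≤ 2 / 3 * (1 - ‖b‖)) :
    ‖g a - g b‖ ≤ 36 * M / (1 - ‖b‖) ^ 2 * ‖a - b‖ := by
  rw [mem_ball_zero_iff] at hb
  have hM0 : 0 ≤ M := le_trans (by simp) (hM 0 (mem_ball_self one_pos))
  have hseg : segment ℝ b a ⊆ closedBall b ‖a - b‖ :=
    (convex_closedBall b _).segment_subset (mem_closedBall_self (norm_nonneg _))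
      (by rw [mem_closedBall, dist_eq_norm])
  have hfar : ∀ ζ ∈ segment ℝ b a, (1 - ‖b‖) / 3 ≤ 1 - ‖ζ‖ := by
    intro ζ hζ
    have := mem_closedBall_iff_norm.1 (hseg hζ)
    linarith [norm_le_norm_add_norm_sub' ζ b]
  have hball : segment ℝ b a ⊆ ball 0 1 := fun ζ hζ => by
    rw [mem_ball_zero_iff]; linarith [hfar ζ hζ]
  refine (convex_segment b a).norm_image_sub_le_of_norm_hasDerivWithin_le
    (fun ζ hζ => (hg.differentiableAt (isOpen_ball.mem_nhds (hball hζ))).hasDerivAt.hasDerivWithinAt)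
    (fun ζ hζ => ?_) (left_mem_segment ℝ b a) (right_mem_segment ℝ b a)
  calc ‖deriv g ζ‖ ≤ 4 * M / (1 - ‖ζ‖) ^ 2 :=
        norm_deriv_le_of_forall_one_sub_norm_sq_mul_le hg hM (hball hζ)
    _ ≤ 4 * M / ((1 - ‖b‖) / 3) ^ 2 := by
        have := hfar ζ hζ
        gcongr
    _ = 36 * M / (1 - ‖b‖) ^ 2 := by
        have : 1 - ‖b‖ ≠ 0 := by linarith
        field_simp
        ring

theorem norm_smul_sub_smul_le_of_norm_sub_le (hg : DifferentiableOn ℂ g (ball 0 1))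
    (hM : ∀ z ∈ ball (0 : ℂ) 1, (1 - ‖z‖ ^ 2) * ‖g z‖ ≤ M) {a b : ℂ} (ha : a ∈ ball (0 : ℂ) 1)
    (hb : b ∈ ball (0 : ℂ) 1) {t : ℝ} (ht : t ≤ 1 / 4)
    (hab : ‖a - b‖ ≤ 4 / 3 * t * (1 - ‖b‖ ^ 2)) :
    ‖(1 - ‖a‖ ^ 2) • g a - (1 - ‖b‖ ^ 2) • g b‖ ≤ 323 * M * t := by
  have hM0 : 0 ≤ M := le_trans (by simp) (hM 0 (mem_ball_self one_pos))
  have ha1 := mem_ball_zero_iff.1 ha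
  have hb1 := mem_ball_zero_iff.1 hb
  have hwb : 0 < 1 - ‖b‖ ^ 2 := by nlinarith [norm_nonneg b]
  have ht0 : 0 ≤ t := by nlinarith [norm_nonneg (a - b)]
  have hT1 : ‖(1 - ‖a‖ ^ 2) • (g a - g b)‖ ≤ 320 * M * t := by
    have hab₁ : ‖a - b‖ ≤ 8 / 3 * t * (1 - ‖b‖) := by
      nlinarith [mul_nonneg (mul_nonneg ht0 (sub_nonneg.2 hb1.le)) (sub_nonneg.2 hb1.le)]
    have hab₂ : ‖a - b‖ ≤ 2 / 3 * (1 - ‖b‖) := by nlinarith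
    have hwa : 1 - ‖a‖ ^ 2 ≤ 10 / 3 * (1 - ‖b‖) := by
      nlinarith [norm_le_norm_add_norm_sub' b a, norm_sub_rev a b, norm_nonneg a]
    have hb' : 1 - ‖b‖ ≠ 0 := by linarith
    rw [norm_smul, Real.norm_of_nonneg (by nlinarith [norm_nonneg a])]
    calc (1 - ‖a‖ ^ 2) * ‖g a - g b‖
        ≤ (10 / 3 * (1 - ‖b‖)) * (36 * M / (1 - ‖b‖) ^ 2 * (8 / 3 * t * (1 - ‖b‖))) := by
          refine mul_le_mul hwa ?_ (norm_nonneg _) (by linarith)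
          exact (norm_sub_le_of_forall_one_sub_norm_sq_mul_le hg hM hb hab₂).trans (by gcongr)
      _ = 320 * M * t := by field_simp; ring
  have hT2 : ‖(‖b‖ ^ 2 - ‖a‖ ^ 2) • g b‖ ≤ 3 * M * t := by
    have hsq := abs_norm_sq_sub_norm_sq_le hb1.le ha1.le
    rw [norm_sub_rev] at hsq
    have hgb : ‖g b‖ ≤ M / (1 - ‖b‖ ^ 2) := by
      rw [le_div_iff₀ hwb, mul_comm]; exact hM b hb
    rw [norm_smul, Real.norm_eq_abs]
    calc |‖b‖ ^ 2 - ‖a‖ ^ 2| * ‖g b‖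
        ≤ (2 * (4 / 3 * t * (1 - ‖b‖ ^ 2))) * (M / (1 - ‖b‖ ^ 2)) :=
          mul_le_mul (hsq.trans (by linarith)) hgb (norm_nonneg _) (by positivity)
      _ = 8 / 3 * M * t := by field_simp; ring
      _ ≤ 3 * M * t := by gcongr; norm_num
  calc ‖(1 - ‖a‖ ^ 2) • g a - (1 - ‖b‖ ^ 2) • g b‖
      = ‖(1 - ‖a‖ ^ 2) • (g a - g b) + (‖b‖ ^ 2 - ‖a‖ ^ 2) • g b‖ := by congr 1; module
    _ ≤ 320 * M * t + 3 * M * t := norm_add_le_of_le hT1 hT2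
    _ = 323 * M * t := by ring

theorem norm_smul_sub_smul_le_pseudoHyperbolicDist (hg : DifferentiableOn ℂ g (ball 0 1))
    (hM : ∀ z ∈ ball (0 : ℂ) 1, (1 - ‖z‖ ^ 2) * ‖g z‖ ≤ M) {a b : ℂ} (ha : a ∈ ball (0 : ℂ) 1)
    (hb : b ∈ ball (0 : ℂ) 1) :
    ‖(1 - ‖a‖ ^ 2) • g a - (1 - ‖b‖ ^ 2) • g b‖ ≤ 400 * M * pseudoHyperbolicDist a b := by
  set ρ := pseudoHyperbolicDist a b
  have hM0 : 0 ≤ M := le_trans (by simp) (hM 0 (mem_ball_self one_pos))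
  have hbound : ∀ z ∈ ball (0 : ℂ) 1, ‖(1 - ‖z‖ ^ 2) • g z‖ ≤ M := fun z hz => by
    rw [norm_smul, Real.norm_of_nonneg (by nlinarith [mem_ball_zero_iff.1 hz, norm_nonneg z])]
    exact hM z hz
  rcases le_or_gt (1 / 4) ρ with hfar | hnear
  · calc _ ≤ M + M := (norm_sub_le _ _).trans (add_le_add (hbound a ha) (hbound b hb))
      _ ≤ 400 * M * ρ := by nlinarith
  · have hab : ‖a - b‖ ≤ 4 / 3 * ρ * (1 - ‖b‖ ^ 2) := by
      nlinarith [one_sub_pseudoHyperbolicDist_mul_norm_sub_le ha hb, norm_nonneg (a - b)]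
    have hρ0 : 0 ≤ ρ := norm_nonneg _
    calc _ ≤ 323 * M * ρ := norm_smul_sub_smul_le_of_norm_sub_le hg hM ha hb hnear.le hab
      _ ≤ 400 * M * ρ := by gcongr; norm_num

end BlochSpace

/-- `∫_D |f'|^p (1 - |z|²)^(p-2)` against Lebesgue measure, i.e. `π` times the integral against the
normalised area measure `dA`. -/
noncomputable def besovEnergy (p : ℝ) (f : ℂ → ℂ) : ℝ :=
  ∫ z in ball (0 : ℂ) 1, ‖deriv f z‖ ^ p * (1 - ‖z‖ ^ 2) ^ (p - 2)

section Bloch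

variable {p : ℝ} {f : ℂ → ℂ} {w : ℂ}

theorem besovEnergy_le_pi_of_add_rpow_le_one (hp : 0 < p)
    (hf : ‖f 0‖ + (π⁻¹ * besovEnergy p f) ^ (1 / p) ≤ 1) : besovEnergy p f ≤ π := by
  by_contra! hE
  have h1 : 1 < π⁻¹ * besovEnergy p f := by rwa [lt_inv_mul_iff₀ pi_pos, mul_one]
  linarith [one_lt_rpow h1 (by positivity : 0 < 1 / p), norm_nonneg (f 0)]

theorem rpow_mul_setIntegral_ball_le_besovEnergy (hp : 1 ≤ p) (hw : ‖w‖ < 1)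
    (hint : IntegrableOn (fun z => ‖deriv f z‖ ^ p * (1 - ‖z‖ ^ 2) ^ (p - 2)) (ball (0 : ℂ) 1)) :
    ((1 - ‖w‖) / 2) ^ (p - 2) * ∫ z in ball w ((1 - ‖w‖) / 2), ‖deriv f z‖ ^ p
      ≤ 6 * besovEnergy p f := by
  set r := (1 - ‖w‖) / 2
  have hr : 0 < r := half_pos (sub_pos.2 hw)
  have hsub : ball w r ⊆ ball 0 1 := ball_subset_closedBall.trans (closedBall_subset_ball_one hw)
  have hnonneg : ∀ z ∈ ball (0 : ℂ) 1, 0 ≤ ‖deriv f z‖ ^ p * (1 - ‖z‖ ^ 2) ^ (p - 2) :=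
    fun z hz => mul_nonneg (by positivity)
      (rpow_nonneg (by nlinarith [mem_ball_zero_iff.1 hz, norm_nonneg z]) _)
  have hweight : ∀ z ∈ ball w r,
      r ^ (p - 2) * ‖deriv f z‖ ^ p ≤ 6 * (‖deriv f z‖ ^ p * (1 - ‖z‖ ^ 2) ^ (p - 2)) := by
    intro z hz
    obtain ⟨hlo, hhi⟩ := one_sub_norm_sq_mem_Icc (mem_ball_iff_norm.1 hz).le
    have := rpow_le_mul_rpow_of_le_of_le_mul hr hlo hhi (by norm_num) (by linarith : -1 ≤ p - 2)
    have : 0 ≤ ‖deriv f z‖ ^ p := by positivity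
    nlinarith
  calc r ^ (p - 2) * ∫ z in ball w r, ‖deriv f z‖ ^ p
      = ∫ z in ball w r, r ^ (p - 2) * ‖deriv f z‖ ^ p := (integral_const_mul _ _).symm
    _ ≤ ∫ z in ball w r, 6 * (‖deriv f z‖ ^ p * (1 - ‖z‖ ^ 2) ^ (p - 2)) :=
        integral_mono_of_nonneg (ae_of_all _ fun z => by positivity)
          ((hint.mono_set hsub).const_mul 6)
          ((ae_restrict_iff' measurableSet_ball).2 (ae_of_all _ hweight))
    _ = 6 * ∫ z in ball w r, ‖deriv f z‖ ^ p * (1 - ‖z‖ ^ 2) ^ (p - 2) := integral_const_mul _ _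
    _ ≤ 6 * besovEnergy p f := by
        gcongr
        exact setIntegral_mono_set hint
          ((ae_restrict_iff' measurableSet_ball).2 (ae_of_all _ hnonneg)) hsub.eventuallyLE

theorem one_sub_norm_sq_mul_norm_deriv_le_of_besovEnergy_le (hp : 1 ≤ p)
    (hf : DifferentiableOn ℂ f (ball 0 1))
    (hint : IntegrableOn (fun z => ‖deriv f z‖ ^ p * (1 - ‖z‖ ^ 2) ^ (p - 2)) (ball (0 : ℂ) 1))
    (hE : besovEnergy p f ≤ π) (hw : w ∈ ball (0 : ℂ) 1) :
    (1 - ‖w‖ ^ 2) * ‖deriv f w‖ ≤ 24 := by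
  rw [mem_ball_zero_iff] at hw
  set r := (1 - ‖w‖) / 2
  have hr : 0 < r := half_pos (sub_pos.2 hw)
  have hmean := ((hf.deriv isOpen_ball).diffContOnCl_ball (closedBall_subset_ball_one hw))
    |>.norm_rpow_le_setAverage hr hp
  rw [setAverage_eq, Complex.volume_real_ball w hr.le, smul_eq_mul] at hmean
  have hpow : (r * ‖deriv f w‖) ^ p ≤ 6 := by
    rw [mul_rpow hr.le (norm_nonneg _)]
    calc r ^ p * ‖deriv f w‖ ^ p
        ≤ r ^ p * ((π * r ^ 2)⁻¹ * ∫ z in ball w r, ‖deriv f z‖ ^ p) := by gcongr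
      _ = π⁻¹ * (r ^ (p - 2) * ∫ z in ball w r, ‖deriv f z‖ ^ p) := by
          rw [rpow_sub hr, rpow_two]
          field_simp
      _ ≤ π⁻¹ * (6 * π) := mul_le_mul_of_nonneg_left
          ((rpow_mul_setIntegral_ball_le_besovEnergy hp hw hint).trans (by linarith))
          (inv_nonneg.2 pi_pos.le)
      _ = 6 := by field_simp
  have hle : r * ‖deriv f w‖ ≤ 6 := by
    by_contra! hlt
    have := rpow_le_rpow_of_exponent_le (by linarith) hp (x := r * ‖deriv f w‖)
    rw [rpow_one] at this
    linarith
  have hweight : 1 - ‖w‖ ^ 2 ≤ 4 * r := by simp only [r]; nlinarith [norm_nonneg w]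
  calc (1 - ‖w‖ ^ 2) * ‖deriv f w‖ ≤ 4 * r * ‖deriv f w‖ := by gcongr
    _ ≤ 24 := by linarith

end Bloch

theorem norm_mul_sub_mul_le {𝕜 : Type*} [NormedField 𝕜] {x y u v α β : 𝕜} {K L : ℝ}
    (hα : α ≠ 0) (hβ : β ≠ 0) (hx : ‖α * x‖ ≤ K) (hxy : ‖α * x - β * y‖ ≤ L) :
    ‖u * x - v * y‖ ≤ K * ‖u / α - v / β‖ + L * ‖v / β‖ := by
  have hsplit : u * x - v * y = α * x * (u / α - v / β) + (α * x - β * y) * (v / β) := by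
    field_simp
    ring
  rw [hsplit]
  refine (norm_add_le _ _).trans (add_le_add ?_ ?_) <;> rw [norm_mul] <;> gcongr

theorem stmt_16_general (p : ℝ) (hp : 1 < p) (φ ψ : ℂ → ℂ) (ν : ℂ → ℝ)
    (hφm : ∀ z ∈ ball (0:ℂ) 1, φ z ∈ ball (0:ℂ) 1)
    (hψm : ∀ z ∈ ball (0:ℂ) 1, ψ z ∈ ball (0:ℂ) 1)
    (hν : ∀ z ∈ ball (0:ℂ) 1, 0 < ν z) :
    ∃ C > 0, ∀ f : ℂ → ℂ,
      DifferentiableOn ℂ f (ball (0:ℂ) 1) →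
      IntegrableOn (fun z : ℂ => ‖deriv f z‖ ^ p * (1 - ‖z‖ ^ 2) ^ (p - 2)) (ball (0:ℂ) 1) →
      ‖f 0‖ + (Real.pi⁻¹ *
          ∫ w in ball (0:ℂ) 1, ‖deriv f w‖ ^ p * (1 - ‖w‖ ^ 2) ^ (p - 2)) ^ (1 / p) ≤ 1 →
      ∀ z ∈ ball (0:ℂ) 1,
        ν z * ‖deriv f (φ z) * deriv φ z - deriv f (ψ z) * deriv ψ z‖ ≤
          C * (‖((ν z : ℝ) : ℂ) * deriv φ z / ((1 - ‖φ z‖ ^ 2 : ℝ) : ℂ) -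
                  ((ν z : ℝ) : ℂ) * deriv ψ z / ((1 - ‖ψ z‖ ^ 2 : ℝ) : ℂ)‖ +
                (ν z * ‖deriv ψ z‖ / (1 - ‖ψ z‖ ^ 2)) *
                  ‖(φ z - ψ z) / (1 - (starRingEnd ℂ) (ψ z) * φ z)‖) := by
  refine ⟨9600, by norm_num, fun f hf hint hnorm z hz => ?_⟩
  have hE := besovEnergy_le_pi_of_add_rpow_le_one (by linarith) hnorm
  have hBloch (w : ℂ) :=
    one_sub_norm_sq_mul_norm_deriv_le_of_besovEnergy_le hp.le hf hint hE (w := w)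
  have hα : 0 < 1 - ‖φ z‖ ^ 2 := by nlinarith [mem_ball_zero_iff.1 (hφm z hz), norm_nonneg (φ z)]
  have hβ : 0 < 1 - ‖ψ z‖ ^ 2 := by nlinarith [mem_ball_zero_iff.1 (hψm z hz), norm_nonneg (ψ z)]
  have hx : ‖((1 - ‖φ z‖ ^ 2 : ℝ) : ℂ) * deriv f (φ z)‖ ≤ 24 := by
    rw [norm_mul, Complex.norm_real, Real.norm_of_nonneg hα.le]
    exact hBloch _ (hφm z hz)
  have hxy := norm_smul_sub_smul_le_pseudoHyperbolicDist (hf.deriv isOpen_ball) hBloch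
    (hφm z hz) (hψm z hz)
  simp only [Complex.real_smul] at hxy
  have key := norm_mul_sub_mul_le (u := (ν z : ℂ) * deriv φ z) (v := (ν z : ℂ) * deriv ψ z)
    (ofReal_ne_zero.2 hα.ne') (ofReal_ne_zero.2 hβ.ne') hx hxy
  rw [norm_div, norm_mul, Complex.norm_real, Complex.norm_real, Real.norm_of_nonneg (hν z hz).le,
    Real.norm_of_nonneg hβ.le, pseudoHyperbolicDist] at key
  calc ν z * ‖deriv f (φ z) * deriv φ z - deriv f (ψ z) * deriv ψ z‖
      = ‖(ν z : ℂ) * deriv φ z * deriv f (φ z) - (ν z : ℂ) * deriv ψ z * deriv f (ψ z)‖ := by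
        rw [show (ν z : ℂ) * deriv φ z * deriv f (φ z) - (ν z : ℂ) * deriv ψ z * deriv f (ψ z)
          = (ν z : ℂ) * (deriv f (φ z) * deriv φ z - deriv f (ψ z) * deriv ψ z) by ring,
          norm_mul, Complex.norm_real, Real.norm_of_nonneg (hν z hz).le]
    _ ≤ _ := key
    _ ≤ _ := by nlinarith [norm_nonneg ((ν z : ℂ) * deriv φ z / ((1 - ‖φ z‖ ^ 2 : ℝ) : ℂ) -
                  (ν z : ℂ) * deriv ψ z / ((1 - ‖ψ z‖ ^ 2 : ℝ) : ℂ))]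

/-- Uniform pointwise estimate for `(C_φ - C_ψ)f` over the unit ball of `B^p`. -/
theorem stmt_16 (p : ℝ) (hp : 1 < p) (φ ψ : ℂ → ℂ) (ν : ℂ → ℝ)
    (hφ : DifferentiableOn ℂ φ (ball (0:ℂ) 1))
    (hψ : DifferentiableOn ℂ ψ (ball (0:ℂ) 1))
    (hφm : ∀ z ∈ ball (0:ℂ) 1, φ z ∈ ball (0:ℂ) 1)
    (hψm : ∀ z ∈ ball (0:ℂ) 1, ψ z ∈ ball (0:ℂ) 1)
    (hν : ∀ z ∈ ball (0:ℂ) 1, 0 < ν z) :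
    ∃ C > 0, ∀ f : ℂ → ℂ,
      DifferentiableOn ℂ f (ball (0:ℂ) 1) →
      IntegrableOn (fun z : ℂ => ‖deriv f z‖ ^ p * (1 - ‖z‖ ^ 2) ^ (p - 2)) (ball (0:ℂ) 1) →
      ‖f 0‖ + (Real.pi⁻¹ *
          ∫ w in ball (0:ℂ) 1, ‖deriv f w‖ ^ p * (1 - ‖w‖ ^ 2) ^ (p - 2)) ^ (1 / p) ≤ 1 →
      ∀ z ∈ ball (0:ℂ) 1,
        ν z * ‖deriv f (φ z) * deriv φ z - deriv f (ψ z) * deriv ψ z‖ ≤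
          C * (‖((ν z : ℝ) : ℂ) * deriv φ z / ((1 - ‖φ z‖ ^ 2 : ℝ) : ℂ) -
                  ((ν z : ℝ) : ℂ) * deriv ψ z / ((1 - ‖ψ z‖ ^ 2 : ℝ) : ℂ)‖ +
                (ν z * ‖deriv ψ z‖ / (1 - ‖ψ z‖ ^ 2)) *
                  ‖(φ z - ψ z) / (1 - (starRingEnd ℂ) (ψ z) * φ z)‖) :=
  stmt_16_general p hp φ ψ ν hφm hψm hν
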